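/- Let G = {m₁, …, m_q, n₁, n₂} be a 2-semidominant set of monomials. For any monomial multidegree m, the set B_m = {L ⊆ G : lcm(L) = m} has cardinality at most 4; moreover, any two elements of B_m contain the same subset of {m₁, …, m_q}, so they differ only in which of n₁, n₂ they contain. -/

import Mathlib

open Finset

variable {X : Type*} [DecidableEq X]

/-- The lcm of a finite set of monomials (monomials = finitely supported
exponent functions): pointwise maximum of exponents. -/
noncomputable def mlcm (L : Finset (X →₀ ℕ)) : X →₀ ℕ := L.sup id

/-- `m` is dominant with respect to `G`: some variable `x` appears in `m`
with exponent at least `k > 0` while every other element of `G` has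
`x`-exponent `< k`. -/
def Dominant (G : Finset (X →₀ ℕ)) (m : X →₀ ℕ) : Prop :=
  ∃ x : X, ∃ k : ℕ, 0 < k ∧ k ≤ m x ∧ ∀ m' ∈ G, m' ≠ m → m' x < k

/-- Total degree of a monomial: sum of its exponents. -/
def mdeg (m : X →₀ ℕ) : ℕ := m.sum fun _ e => e

/-! A dominant generator is the only element of `G` reaching its dominant exponent, so it
divides `lcm L` for `L ⊆ G` exactly when it lies in `L`. Hence two subsets of `G` with the same
lcm contain the same dominant generators, and can differ only inside the set of nondominant ones;
with two nondominant generators this leaves at most `2 ^ 2` possibilities. -/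

lemma mlcm_apply (L : Finset (X →₀ ℕ)) (x : X) : mlcm L x = L.sup (· x) := by
  induction L using Finset.induction with
  | empty => simp [mlcm, bot_eq_zero]
  | insert _ _ _ ih => simp [mlcm, Finsupp.sup_apply, ← ih]

lemma Dominant.mem_of_le_mlcm {G L : Finset (X →₀ ℕ)} {g : X →₀ ℕ} (hdom : Dominant G g)
    (hLG : L ⊆ G) (hle : g ≤ mlcm L) : g ∈ L := by
  obtain ⟨x, k, hk, hkg, hlt⟩ := hdom
  by_contra hgL
  have hsup : mlcm L x < k := by
    rw [mlcm_apply]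
    exact (Finset.sup_lt_iff hk).2 fun f hf => hlt f (hLG hf) (ne_of_mem_of_not_mem hf hgL)
  exact absurd (hle x) (by omega)

lemma sdiff_eq_of_mlcm_eq {G S L₁ L₂ : Finset (X →₀ ℕ)}
    (hdom : ∀ g ∈ G, g ∉ S → Dominant G g) (hL₁ : L₁ ⊆ G) (hL₂ : L₂ ⊆ G)
    (h : mlcm L₁ = mlcm L₂) : L₁ \ S = L₂ \ S := by
  have sdiff_subset {A B : Finset (X →₀ ℕ)} (hA : A ⊆ G) (hB : B ⊆ G) (hAB : mlcm A = mlcm B) :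
      A \ S ⊆ B \ S := fun g hg => by
    obtain ⟨hgA, hgS⟩ := Finset.mem_sdiff.1 hg
    exact Finset.mem_sdiff.2
      ⟨(hdom g (hA hgA) hgS).mem_of_le_mlcm hB (hAB ▸ Finset.le_sup (f := id) hgA), hgS⟩
  exact (sdiff_subset hL₁ hL₂ h).antisymm (sdiff_subset hL₂ hL₁ h.symm)

lemma card_le_two_pow_of_sdiff_eq {α : Type*} [DecidableEq α] {𝓛 : Finset (Finset α)}
    {S : Finset α} (h : ∀ L₁ ∈ 𝓛, ∀ L₂ ∈ 𝓛, L₁ \ S = L₂ \ S) : #𝓛 ≤ 2 ^ #S := by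
  rw [← Finset.card_powerset]
  refine Finset.card_le_card_of_injOn (· ∩ S) (fun L _ => by simp) fun L₁ hL₁ L₂ hL₂ hinter => ?_
  calc L₁ = L₁ \ S ∪ L₁ ∩ S := (Finset.sdiff_union_inter _ _).symm
    _ = L₂ \ S ∪ L₂ ∩ S := by rw [h L₁ hL₁ L₂ hL₂, show L₁ ∩ S = L₂ ∩ S from hinter]
    _ = L₂ := Finset.sdiff_union_inter _ _

theorem two_semidominant_Bm_card_general (G : Finset (X →₀ ℕ)) (n₁ n₂ : X →₀ ℕ)
    (hdom : ∀ m ∈ G, m ≠ n₁ → m ≠ n₂ → Dominant G m)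
    (m : X →₀ ℕ) :
    (G.powerset.filter (fun L => mlcm L = m)).card ≤ 4 ∧
    (∀ L₁ ⊆ G, ∀ L₂ ⊆ G, mlcm L₁ = m → mlcm L₂ = m →
      L₁ \ {n₁, n₂} = L₂ \ {n₁, n₂}) := by
  have hdom_off : ∀ g ∈ G, g ∉ ({n₁, n₂} : Finset _) → Dominant G g := fun g hg hgn => by
    simp only [Finset.mem_insert, Finset.mem_singleton, not_or] at hgn
    exact hdom g hg hgn.1 hgn.2
  have key : ∀ L₁ ⊆ G, ∀ L₂ ⊆ G, mlcm L₁ = m → mlcm L₂ = m →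
      L₁ \ {n₁, n₂} = L₂ \ {n₁, n₂} := fun L₁ hL₁ L₂ hL₂ e₁ e₂ =>
    sdiff_eq_of_mlcm_eq hdom_off hL₁ hL₂ (e₁.trans e₂.symm)
  refine ⟨?_, key⟩
  calc _ ≤ 2 ^ #({n₁, n₂} : Finset (X →₀ ℕ)) :=
        card_le_two_pow_of_sdiff_eq fun L₁ hL₁ L₂ hL₂ => by
          simp only [Finset.mem_filter, Finset.mem_powerset] at hL₁ hL₂
          exact key L₁ hL₁.1 L₂ hL₂.1 hL₁.2 hL₂.2
    _ ≤ 2 ^ 2 := Nat.pow_le_pow_right two_pos Finset.card_le_two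

theorem two_semidominant_Bm_card (G : Finset (X →₀ ℕ)) (n₁ n₂ : X →₀ ℕ)
    (h1 : n₁ ∈ G) (h2 : n₂ ∈ G) (hne : n₁ ≠ n₂)
    (hnd1 : ¬ Dominant G n₁) (hnd2 : ¬ Dominant G n₂)
    (hdom : ∀ m ∈ G, m ≠ n₁ → m ≠ n₂ → Dominant G m)
    (m : X →₀ ℕ) :
    (G.powerset.filter (fun L => mlcm L = m)).card ≤ 4 ∧
    (∀ L₁ ⊆ G, ∀ L₂ ⊆ G, mlcm L₁ = m → mlcm L₂ = m →
      L₁ \ {n₁, n₂} = L₂ \ {n₁, n₂}) :=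
  two_semidominant_Bm_card_general G n₁ n₂ hdom m
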